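/- arXiv:1203.2176 — 6 statements merged into one kernel-verified Lean document; each statement's English description precedes it below -/
import Mathlib

section
/- Let H be a Hilbert space, P a positive invertible bounded operator on H^{⊗(n+1)}, P' a positive invertible bounded operator on H^{⊗n}, and suppose P ≤ C (1 ⊗ P') for some constant C > 0. Define a new inner product ⟨f,g⟩_Q = ⟨f, P g⟩ on H^{⊗(n+1)} and ⟨f,g⟩_Q = ⟨f, P' g⟩ on H^{⊗n}. Then for any h ∈ H and f ∈ H^{⊗n}, the creation operator a⁺(h) f = h ⊗ f satisfies ‖a⁺(h) f‖_Q² ≤ C ‖h‖² ‖f‖_Q². -/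
open scoped RealInnerProductSpace

namespace ContinuousLinearMap

variable {E : Type*} [NormedAddCommGroup E] [InnerProductSpace ℝ E]

theorem inner_apply_self_le_of_le {A B : E →L[ℝ] E} (hAB : A ≤ B) (x : E) :
    ⟪x, A x⟫ ≤ ⟪x, B x⟫ := by
  have := ((le_def A B).mp hAB).inner_nonneg_right x
  rwa [sub_apply, inner_sub_right, sub_nonneg] at this

end ContinuousLinearMap

section TensorMap

variable {H K E : Type*} [NormedAddCommGroup H] [InnerProductSpace ℝ H]
  [NormedAddCommGroup K] [InnerProductSpace ℝ K] [NormedAddCommGroup E] [InnerProductSpace ℝ E]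

theorem inner_tensor_apply_self_eq {t : H →ₗ[ℝ] K →ₗ[ℝ] E}
    (ht : ∀ (h h' : H) (f f' : K), ⟪t h f, t h' f'⟫ = ⟪h, h'⟫ * ⟪f, f'⟫)
    {T : E →L[ℝ] E} {S : K →L[ℝ] K} (hT : ∀ (h : H) (f : K), T (t h f) = t h (S f))
    (h : H) (f : K) :
    ⟪t h f, T (t h f)⟫ = ‖h‖ ^ 2 * ⟪f, S f⟫ := by
  rw [hT, ht, real_inner_self_eq_norm_sq]

end TensorMap

theorem creation_operator_Q_norm_bound_general
    {H K E : Type*} [NormedAddCommGroup H] [InnerProductSpace ℝ H]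
    [NormedAddCommGroup K] [InnerProductSpace ℝ K]
    [NormedAddCommGroup E] [InnerProductSpace ℝ E]
    (t : H →ₗ[ℝ] K →ₗ[ℝ] E)
    (ht : ∀ (h h' : H) (f f' : K), ⟪t h f, t h' f'⟫ = ⟪h, h'⟫ * ⟪f, f'⟫)
    (P : E →L[ℝ] E) (P' : K →L[ℝ] K) (C : ℝ)
    (oneP' : E →L[ℝ] E) (honeP' : ∀ (h : H) (f : K), oneP' (t h f) = t h (P' f))
    (hle : (C • oneP' - P).IsPositive)
    (h : H) (f : K) :
    ⟪t h f, P (t h f)⟫ ≤ C * ‖h‖ ^ 2 * ⟪f, P' f⟫ :=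
  calc ⟪t h f, P (t h f)⟫ ≤ ⟪t h f, (C • oneP') (t h f)⟫ :=
        ContinuousLinearMap.inner_apply_self_le_of_le hle (t h f)
    _ = C * ⟪t h f, oneP' (t h f)⟫ := by
        rw [smul_apply, real_inner_smul_right]
    _ = C * ‖h‖ ^ 2 * ⟪f, P' f⟫ := by
        rw [inner_tensor_apply_self_eq ht honeP', mul_assoc]

/-- Let `P` be a positive invertible operator on `H^{⊗(n+1)}` and `P'` a positive invertible
operator on `H^{⊗n}` with `P ≤ C (1 ⊗ P')`, and endow the tensor powers with the deformed
inner products `⟨f,g⟩_Q = ⟨f, P g⟩` and `⟨f,g⟩_Q = ⟨f, P' g⟩`.  Then the creation operator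
`a⁺(h) f = h ⊗ f` satisfies `‖a⁺(h) f‖_Q² ≤ C ‖h‖² ‖f‖_Q²`.

Here `H^{⊗n}` and `H^{⊗(n+1)}` are abstracted as Hilbert spaces `K` and `E`, the tensor map
`(h, f) ↦ h ⊗ f` as a bilinear map `t` satisfying `⟨t h f, t h' f'⟩ = ⟨h,h'⟩⟨f,f'⟩`, and
`1 ⊗ P'` as an operator `oneP'` with `oneP' (t h f) = t h (P' f)`. -/
theorem creation_operator_Q_norm_bound
    {H K E : Type*} [NormedAddCommGroup H] [InnerProductSpace ℝ H] [CompleteSpace H]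
    [NormedAddCommGroup K] [InnerProductSpace ℝ K] [CompleteSpace K]
    [NormedAddCommGroup E] [InnerProductSpace ℝ E] [CompleteSpace E]
    (t : H →ₗ[ℝ] K →ₗ[ℝ] E)
    (ht : ∀ (h h' : H) (f f' : K), ⟪t h f, t h' f'⟫ = ⟪h, h'⟫ * ⟪f, f'⟫)
    (P : E →L[ℝ] E) (P' : K →L[ℝ] K) (C : ℝ) (hC : 0 < C)
    (hP : P.IsPositive) (hP' : P'.IsPositive)
    (hPu : IsUnit P) (hP'u : IsUnit P')
    (oneP' : E →L[ℝ] E) (honeP' : ∀ (h : H) (f : K), oneP' (t h f) = t h (P' f))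
    (hle : (C • oneP' - P).IsPositive)
    (h : H) (f : K) :
    ⟪t h f, P (t h f)⟫ ≤ C * ‖h‖ ^ 2 * ⟪f, P' f⟫ :=
  creation_operator_Q_norm_bound_general t ht P P' C oneP' honeP' hle h f
end

section
/- The number of pair partitions V of {1,...,n} that are compatible with a given sign sequence v ∈ {+,−}^n (i.e., each pair (a,z) of V with a < z has v_a = − and v_z = +) is at most 1 when the sequence is 'non-crossing forced', and in general, for any sign sequence the sum over compatible pairings of q^{|crossings(V)|} is bounded by Π_{k=1}^{p} (1 + q + ··· + q^{k-1}) ≤ (1-q)^{-p} where n = 2p and 0 ≤ q < 1. -/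
/-!
Encode a compatible pairing by its crossing degrees: at each `-` position `i`, the number of
crossings whose later-opening pair opens at `i`. The total number of crossings is the sum of
the degrees. At the `k`-th `-` (counting from `0`) the degree is at most `k`, because each
such crossing is determined by the left leg of the other pair, an earlier `-`. The encoding
is injective: going from right to left, the degree at `i` is strictly increasing in the
partner of `i` once the pairs opening further right are known. Hence the sum is at most
`∑_{c k ≤ k} ∏_k q ^ c k = ∏_k (1 + q + ⋯ + q ^ k)`, and each factor is at most
`(1 - q)⁻¹`.
-/

open scoped Classical

/-- `V` is a pair partition of `{0, …, n-1}`. -/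
def IsPairing (n : ℕ) (V : Finset (Fin n × Fin n)) : Prop :=
  (∀ p ∈ V, p.1 < p.2) ∧
    ∀ k : Fin n, ∃! p : Fin n × Fin n, p ∈ V ∧ (p.1 = k ∨ p.2 = k)

/-- The set of crossings of a pairing: pairs of pairs `(a,z), (a',z')` with
`a < a' < z < z'`. -/
def crossings (n : ℕ) (V : Finset (Fin n × Fin n)) :
    Finset ((Fin n × Fin n) × (Fin n × Fin n)) :=
  (V ×ˢ V).filter (fun c => c.1.1 < c.2.1 ∧ c.2.1 < c.1.2 ∧ c.1.2 < c.2.2)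

open Finset

namespace IsPairing

variable {n : ℕ} {V : Finset (Fin n × Fin n)} {pr pr' : Fin n × Fin n}

theorem eq_of_fst_eq (hV : IsPairing n V) (hpr : pr ∈ V) (hpr' : pr' ∈ V)
    (h : pr.1 = pr'.1) : pr = pr' :=
  (hV.2 pr.1).unique ⟨hpr, Or.inl rfl⟩ ⟨hpr', Or.inl h.symm⟩

theorem eq_of_snd_eq (hV : IsPairing n V) (hpr : pr ∈ V) (hpr' : pr' ∈ V)
    (h : pr.2 = pr'.2) : pr = pr' :=
  (hV.2 pr.2).unique ⟨hpr, Or.inr rfl⟩ ⟨hpr', Or.inr h.symm⟩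

end IsPairing

theorem mem_crossings {n : ℕ} {V : Finset (Fin n × Fin n)}
    {c : (Fin n × Fin n) × (Fin n × Fin n)} :
    c ∈ crossings n V ↔
      (c.1 ∈ V ∧ c.2 ∈ V) ∧ c.1.1 < c.2.1 ∧ c.2.1 < c.1.2 ∧ c.1.2 < c.2.2 := by
  simp only [crossings, mem_filter, mem_product]

def IsCompatible {n : ℕ} (v : Fin n → Bool) (V : Finset (Fin n × Fin n)) : Prop :=
  IsPairing n V ∧ ∀ pr ∈ V, v pr.1 = false ∧ v pr.2 = true

def crossingDegree {n : ℕ} (V : Finset (Fin n × Fin n)) (i : Fin n) : ℕ :=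
  #{c ∈ crossings n V | c.2.1 = i}

theorem card_crossings_eq_sum_crossingDegree {n : ℕ} (V : Finset (Fin n × Fin n)) :
    #(crossings n V) = ∑ i, crossingDegree V i :=
  card_eq_sum_card_fiberwise fun c _ => mem_univ c.2.1

namespace IsCompatible

variable {n : ℕ} {v : Fin n → Bool} {V V' : Finset (Fin n × Fin n)} {i z z' : Fin n}

theorem exists_mem_of_false (hV : IsCompatible v V) (hi : v i = false) : ∃ z, (i, z) ∈ V := by
  obtain ⟨⟨a, z⟩, ⟨hpr, rfl | rfl⟩, -⟩ := hV.1.2 i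
  · exact ⟨z, hpr⟩
  · simp [(hV.2 _ hpr).2] at hi

theorem exists_mem_of_true (hV : IsCompatible v V) (hz : v z = true) : ∃ a, (a, z) ∈ V := by
  obtain ⟨⟨a, b⟩, ⟨hpr, rfl | rfl⟩, -⟩ := hV.1.2 z
  · simp [(hV.2 _ hpr).1] at hz
  · exact ⟨a, hpr⟩

theorem card_filter_false (hV : IsCompatible v V) : #{i | v i = false} = #V := by
  have himage : ({i | v i = false} : Finset (Fin n)) = V.image Prod.fst := by
    ext i
    simp only [mem_filter, mem_univ, true_and, mem_image]
    refine ⟨fun hi => ?_, ?_⟩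
    · obtain ⟨z, hz⟩ := hV.exists_mem_of_false hi
      exact ⟨_, hz, rfl⟩
    · rintro ⟨pr, hpr, rfl⟩
      exact (hV.2 pr hpr).1
  rw [himage, card_image_of_injOn fun _ hpr _ hpr' => hV.1.eq_of_fst_eq hpr hpr']

theorem card_filter_true (hV : IsCompatible v V) : #{i | v i = true} = #V := by
  have himage : ({i | v i = true} : Finset (Fin n)) = V.image Prod.snd := by
    ext i
    simp only [mem_filter, mem_univ, true_and, mem_image]
    refine ⟨fun hi => ?_, ?_⟩
    · obtain ⟨a, ha⟩ := hV.exists_mem_of_true hi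
      exact ⟨_, ha, rfl⟩
    · rintro ⟨pr, hpr, rfl⟩
      exact (hV.2 pr hpr).2
  rw [himage, card_image_of_injOn fun _ hpr _ hpr' => hV.1.eq_of_snd_eq hpr hpr']

theorem two_mul_card_filter_false (hV : IsCompatible v V) : 2 * #{i | v i = false} = n := by
  have := card_filter_add_card_filter_not (s := univ) fun i => v i = false
  simp only [Bool.not_eq_false, card_univ, Fintype.card_fin] at this
  rw [hV.card_filter_true, hV.card_filter_false] at this
  rw [hV.card_filter_false]
  omega

theorem crossingDegree_eq_zero (hV : IsCompatible v V) (hi : v i = true) :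
    crossingDegree V i = 0 :=
  card_eq_zero.2 <| filter_eq_empty_iff.2 fun c hc hci => by
    simpa [hci, hi] using (hV.2 c.2 (mem_crossings.1 hc).1.2).1

theorem card_crossings_eq_sum (hV : IsCompatible v V) :
    #(crossings n V) = ∑ i ∈ {i | v i = false}, crossingDegree V i := by
  rw [card_crossings_eq_sum_crossingDegree, sum_filter_of_ne]
  intro i _ hi
  by_contra hvi
  exact hi (hV.crossingDegree_eq_zero (by simpa using hvi))

theorem crossingDegree_le (hV : IsCompatible v V) (i : Fin n) :
    crossingDegree V i ≤ #{j | v j = false ∧ j < i} := by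
  refine card_le_card_of_injOn (fun c => c.1.1) (fun c hc => ?_) fun c hc c' hc' h => ?_
  · obtain ⟨hc, hci⟩ := mem_filter.1 hc
    obtain ⟨⟨hc1, -⟩, hlt, -⟩ := mem_crossings.1 hc
    simpa [← hci] using ⟨(hV.2 _ hc1).1, hlt⟩
  · obtain ⟨hc, hci⟩ := mem_filter.1 hc
    obtain ⟨hc', hci'⟩ := mem_filter.1 hc'
    obtain ⟨⟨hc1, hc2⟩, -⟩ := mem_crossings.1 hc
    obtain ⟨⟨hc1', hc2'⟩, -⟩ := mem_crossings.1 hc'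
    exact Prod.ext (hV.1.eq_of_fst_eq hc1 hc1' h)
      (hV.1.eq_of_fst_eq hc2 hc2' (hci.trans hci'.symm))

/-- Only pairs opening right of `i` enter the condition on `w`. -/
theorem crossingDegree_eq_card (hV : IsCompatible v V) (hz : (i, z) ∈ V) :
    crossingDegree V i = #{w ∈ Ioo i z | v w = true ∧ ∀ a, i < a → (a, w) ∉ V} := by
  refine card_bij (fun c _ => c.1.2) (fun c hc => ?_) (fun c hc c' hc' h => ?_) fun w hw => ?_
  · obtain ⟨⟨a, w⟩, i', z'⟩ := c
    obtain ⟨hcross, rfl : i' = i⟩ := mem_filter.1 hc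
    obtain ⟨⟨hc1, hc2⟩, hlt₁, hlt₂, hlt₃⟩ := mem_crossings.1 hcross
    obtain rfl : z' = z := congrArg Prod.snd (hV.1.eq_of_fst_eq hc2 hz rfl)
    refine mem_filter.2 ⟨mem_Ioo.2 ⟨hlt₂, hlt₃⟩, (hV.2 _ hc1).2, fun b hb hbw => ?_⟩
    obtain rfl : b = a := congrArg Prod.fst (hV.1.eq_of_snd_eq hbw hc1 rfl)
    exact lt_asymm hb hlt₁
  · obtain ⟨hc, hci⟩ := mem_filter.1 hc
    obtain ⟨hc', hci'⟩ := mem_filter.1 hc'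
    obtain ⟨⟨hc1, hc2⟩, -⟩ := mem_crossings.1 hc
    obtain ⟨⟨hc1', hc2'⟩, -⟩ := mem_crossings.1 hc'
    exact Prod.ext (hV.1.eq_of_snd_eq hc1 hc1' h)
      (hV.1.eq_of_fst_eq hc2 hc2' (hci.trans hci'.symm))
  · obtain ⟨hw, hvw, hright⟩ := mem_filter.1 hw
    obtain ⟨hiw, hwz⟩ := mem_Ioo.1 hw
    obtain ⟨a, ha⟩ := hV.exists_mem_of_true hvw
    have hai : a < i := by
      rcases lt_trichotomy a i with hai | rfl | hia
      · exact hai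
      · exact absurd (congrArg Prod.snd (hV.1.eq_of_fst_eq ha hz rfl)) hwz.ne
      · exact absurd ha (hright a hia)
    exact ⟨((a, w), (i, z)),
      mem_filter.2 ⟨mem_crossings.2 ⟨⟨ha, hz⟩, hai, hiw, hwz⟩, rfl⟩, rfl⟩

theorem crossingDegree_lt (hV : IsCompatible v V) (hV' : IsCompatible v V')
    (hagree : ∀ j, i < j → ∀ w, (j, w) ∈ V' ↔ (j, w) ∈ V)
    (hz : (i, z) ∈ V) (hz' : (i, z') ∈ V') (hzz' : z < z') :
    crossingDegree V i < crossingDegree V' i := by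
  rw [hV.crossingDegree_eq_card hz, hV'.crossingDegree_eq_card hz']
  have hright : ∀ w, (∀ a, i < a → (a, w) ∉ V') ↔ ∀ a, i < a → (a, w) ∉ V :=
    fun w => forall₂_congr fun a ha => not_congr (hagree a ha w)
  simp_rw [hright]
  refine card_lt_card <| (ssubset_iff_of_subset <|
    filter_subset_filter _ (Ioo_subset_Ioo_right hzz'.le)).2 ⟨z, ?_, fun h => ?_⟩
  · refine mem_filter.2 ⟨mem_Ioo.2 ⟨hV.1.1 _ hz, hzz'⟩, (hV.2 _ hz).2, fun a ha haz => ?_⟩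
    exact ha.ne' (congrArg Prod.fst (hV.1.eq_of_snd_eq haz hz rfl))
  · exact right_notMem_Ioo (mem_filter.1 h).1

theorem eq_of_crossingDegree_eq (hV : IsCompatible v V) (hV' : IsCompatible v V')
    (h : ∀ i, crossingDegree V i = crossingDegree V' i) : V = V' := by
  have hopen : ∀ i z, (i, z) ∈ V ↔ (i, z) ∈ V' := by
    intro i
    induction i using WellFoundedGT.induction with
    | _ i ih =>
      cases hvi : v i with
      | true =>
        intro z
        exact iff_of_false (fun hz => by simpa [hvi] using (hV.2 _ hz).1)
          fun hz => by simpa [hvi] using (hV'.2 _ hz).1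
      | false =>
        obtain ⟨z, hz⟩ := hV.exists_mem_of_false hvi
        obtain ⟨z', hz'⟩ := hV'.exists_mem_of_false hvi
        obtain rfl : z = z' := by
          rcases lt_trichotomy z z' with hlt | heq | hgt
          · have ih' j hj w := (ih j hj w).symm
            exact absurd (h i) (hV.crossingDegree_lt hV' ih' hz hz' hlt).ne
          · exact heq
          · exact absurd (h i) (hV'.crossingDegree_lt hV ih hz' hz hgt).ne'
        intro w
        exact ⟨fun hw => hV.1.eq_of_fst_eq hw hz rfl ▸ hz',
          fun hw => hV'.1.eq_of_fst_eq hw hz' rfl ▸ hz⟩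
  ext ⟨i, z⟩
  exact hopen i z

end IsCompatible

theorem Finset.card_filter_lt_orderEmbOfFin {α : Type*} [LinearOrder α] (s : Finset α) {k : ℕ}
    (h : s.card = k) (i : Fin k) : #{x ∈ s | x < s.orderEmbOfFin h i} = i := by
  have : {x ∈ s | x < s.orderEmbOfFin h i} = (Iio i).map (s.orderEmbOfFin h).toEmbedding := by
    ext x
    simp only [mem_filter, mem_map, mem_Iio, RelEmbedding.coe_toEmbedding]
    constructor
    · rintro ⟨hx, hlt⟩
      obtain ⟨j, rfl⟩ : x ∈ Set.range (s.orderEmbOfFin h) := by rwa [range_orderEmbOfFin]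
      exact ⟨j, (s.orderEmbOfFin h).lt_iff_lt.1 hlt, rfl⟩
    · rintro ⟨j, hj, rfl⟩
      exact ⟨orderEmbOfFin_mem s h j, (s.orderEmbOfFin h).lt_iff_lt.2 hj⟩
  rw [this, card_map, Fin.card_Iio]

theorem Finset.sum_prod_le_prod_sum_range {ι R : Type*} [Fintype ι] [CommSemiring R]
    [PartialOrder R] [IsOrderedRing R] {f : ι → ℕ → R} (hf : ∀ i m, 0 ≤ f i m)
    {b : ι → ℕ} {s : Finset (ι → ℕ)} (hs : ∀ c ∈ s, ∀ i, c i ≤ b i) :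
    ∑ c ∈ s, ∏ i, f i (c i) ≤ ∏ i, ∑ m ∈ range (b i + 1), f i m := by
  rw [prod_univ_sum]
  exact sum_le_sum_of_subset_of_nonneg
    (fun c hc => Fintype.mem_piFinset.2 fun i => mem_range.2 (Nat.lt_succ_of_le (hs c hc i)))
    fun c _ _ => prod_nonneg fun i _ => hf i (c i)

theorem geom_sum_le_inv_one_sub {K : Type*} [Field K] [LinearOrder K] [IsStrictOrderedRing K]
    {q : K} (hq0 : 0 ≤ q) (hq1 : q < 1) (n : ℕ) :
    ∑ m ∈ range n, q ^ m ≤ (1 - q)⁻¹ := by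
  have := geom_sum_Ico_le_of_lt_one (m := 0) (n := n) hq0 hq1
  rwa [← range_eq_Ico, pow_zero, one_div] at this

theorem sum_pow_card_crossings_le {n : ℕ} {v : Fin n → Bool}
    (F : Finset (Finset (Fin n × Fin n))) (hF : ∀ V ∈ F, IsCompatible v V)
    {q : ℝ} (hq : 0 ≤ q) :
    ∑ V ∈ F, q ^ #(crossings n V)
      ≤ ∏ k ∈ range #{i | v i = false}, ∑ m ∈ range (k + 1), q ^ m := by
  set M : Finset (Fin n) := {i | v i = false}
  set e := M.orderEmbOfFin rfl
  set code : Finset (Fin n × Fin n) → Fin #M → ℕ := fun V k => crossingDegree V (e k)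
  have hcard : ∀ V ∈ F, #(crossings n V) = ∑ k, code V k := fun V hV => by
    rw [(hF V hV).card_crossings_eq_sum]
    change ∑ i ∈ M, crossingDegree V i = _
    conv_lhs => rw [← map_orderEmbOfFin_univ M rfl, sum_map]
    rfl
  have hinj : Set.InjOn code F := fun V hV V' hV' hcode =>
    (hF V hV).eq_of_crossingDegree_eq (hF V' hV') fun i => by
      cases hvi : v i with
      | true => rw [(hF V hV).crossingDegree_eq_zero hvi, (hF V' hV').crossingDegree_eq_zero hvi]
      | false =>
        obtain ⟨k, rfl⟩ : i ∈ Set.range e := by rw [range_orderEmbOfFin]; simpa [M] using hvi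
        exact congrFun hcode k
  have hbound : ∀ c ∈ F.image code, ∀ k, c k ≤ k := by
    simp only [mem_image, forall_exists_index, and_imp]
    rintro _ V hV rfl k
    calc code V k ≤ #{j | v j = false ∧ j < e k} := (hF V hV).crossingDegree_le (e k)
      _ = k := by rw [← filter_filter, card_filter_lt_orderEmbOfFin]
  calc ∑ V ∈ F, q ^ #(crossings n V) = ∑ c ∈ F.image code, ∏ k, q ^ c k := by
        rw [sum_image hinj]
        exact sum_congr rfl fun V hV => by rw [hcard V hV, prod_pow_eq_pow_sum]
    _ ≤ ∏ k : Fin #M, ∑ m ∈ range (k + 1), q ^ m :=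
        sum_prod_le_prod_sum_range (fun _ m => pow_nonneg hq m) hbound
    _ = ∏ k ∈ range #M, ∑ m ∈ range (k + 1), q ^ m :=
        Fin.prod_univ_eq_prod_range (fun k => ∑ m ∈ range (k + 1), q ^ m) _

/-- For any sign sequence `v ∈ {+,−}^{2p}` (with `+` as `true`, `−` as `false`) and
`0 ≤ q < 1`, the sum over pair partitions `V` compatible with `v` (each pair has an
annihilator `−` at its left leg and a creator `+` at its right leg) of
`q^{#crossings(V)}` is bounded by `Π_{k=1}^{p} (1 + q + ⋯ + q^{k-1}) ≤ (1-q)^{-p}`. -/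
theorem compatible_pairing_crossing_sum_bound
    (p : ℕ) (q : ℝ) (hq0 : 0 ≤ q) (hq1 : q < 1) (v : Fin (2 * p) → Bool) :
    ((∑ V ∈ Finset.univ.filter (fun V : Finset (Fin (2 * p) × Fin (2 * p)) =>
        IsPairing (2 * p) V ∧ ∀ pr ∈ V, v pr.1 = false ∧ v pr.2 = true),
        q ^ (crossings (2 * p) V).card)
      ≤ ∏ k ∈ Finset.range p, ∑ m ∈ Finset.range (k + 1), q ^ m) ∧
    ((∏ k ∈ Finset.range p, ∑ m ∈ Finset.range (k + 1), q ^ m) ≤ ((1 - q)⁻¹) ^ p) := by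
  set F := Finset.univ.filter (fun V : Finset (Fin (2 * p) × Fin (2 * p)) =>
    IsPairing (2 * p) V ∧ ∀ pr ∈ V, v pr.1 = false ∧ v pr.2 = true)
  have hF : ∀ V ∈ F, IsCompatible v V := fun V hV => (mem_filter.1 hV).2
  refine ⟨?_, ?_⟩
  · rcases F.eq_empty_or_nonempty with hempty | ⟨V, hV⟩
    · rw [hempty, sum_empty]
      exact prod_nonneg fun k _ => sum_nonneg fun m _ => pow_nonneg hq0 m
    · have hM : #{i | v i = false} = p := by have := (hF V hV).two_mul_card_filter_false; omega
      simpa [hM] using sum_pow_card_crossings_le F hF hq0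
  · calc ∏ k ∈ range p, ∑ m ∈ range (k + 1), q ^ m ≤ ∏ k ∈ range p, (1 - q)⁻¹ :=
          prod_le_prod (fun k _ => sum_nonneg fun m _ => pow_nonneg hq0 m)
            fun k _ => geom_sum_le_inv_one_sub hq0 hq1 (k + 1)
      _ = (1 - q)⁻¹ ^ p := by rw [prod_const, card_range]
end

section
/- The vacuum vector Ω is cyclic for Γ_Q(H): the closure of Γ_Q(H)Ω equals F_Q(H). Specifically, every simple tensor f_1 ⊗ ··· ⊗ f_n ∈ H^{⊗n} lies in the closed linear span of {w(h_1)···w(h_k)Ω : k ≥ 0, h_i ∈ H}, by induction on n using that w(f_1)···w(f_n)Ω = f_1 ⊗ ··· ⊗ f_n + g with g ∈ ⊕_{k<n} H^{⊗k}. -/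
/-- The vacuum vector is cyclic for `Γ_Q(H)`.

Abstractly: let `F` be the `Q`-Fock space, `Ω` the vacuum, `W h` (`h ∈ H`) the field
operators, and `V n ⊆ F` the subspace corresponding to `H^{⊗n}`.  Assume `V 0 = ℂΩ`
(here over `ℝ`), that the algebraic direct sum `⨆ n, V n` is dense in `F` (simple tensors
are total), and the structural fact `w(f) ξ = f ⊗ ξ + (lower order)`, i.e.
`V (n+1) ⊆ span {W h ξ : ξ ∈ V n} + Σ_{k ≤ n} V k`.  Then the span of
`{w(h₁) ⋯ w(h_k) Ω}` is dense in `F`, i.e. `Ω` is cyclic. -/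
theorem vacuum_cyclic
    {F : Type*} [NormedAddCommGroup F] [InnerProductSpace ℝ F] [CompleteSpace F]
    {H : Type*} (Ω : F) (W : H → (F →L[ℝ] F))
    (V : ℕ → Submodule ℝ F)
    (hV0 : V 0 = Submodule.span ℝ {Ω})
    (hdense : Dense ((⨆ n, V n : Submodule ℝ F) : Set F))
    (hstep : ∀ n, V (n + 1) ≤
      Submodule.span ℝ {x : F | ∃ h : H, ∃ ξ ∈ V n, x = W h ξ} ⊔
        ⨆ k ∈ Finset.range (n + 1), V k) :
    Dense ((Submodule.span ℝ
      {x : F | ∃ l : List H, x = ((l.map W).prod) Ω} : Submodule ℝ F) : Set F) := by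
  set M := Submodule.span ℝ {x : F | ∃ l : List H, x = ((l.map W).prod) Ω} with hM
  have hΩ : Ω ∈ M := Submodule.subset_span ⟨[], by simp⟩
  have hW : ∀ h : H, ∀ x ∈ M, W h x ∈ M := by
    intro h x hx
    induction hx using Submodule.span_induction with
    | mem y hy =>
      obtain ⟨l, rfl⟩ := hy
      exact Submodule.subset_span ⟨h :: l, by simp⟩
    | zero => rw [map_zero]; exact M.zero_mem
    | add a b _ _ ha hb => rw [map_add]; exact M.add_mem ha hb
    | smul c a _ ha => rw [map_smul]; exact M.smul_mem c ha
  have hVle : ∀ n, V n ≤ M := by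
    intro n
    induction n using Nat.strong_induction_on with
    | _ n ih =>
      cases n with
      | zero =>
        rw [hV0]
        exact Submodule.span_le.2 (by simpa using hΩ)
      | succ m =>
        refine le_trans (hstep m) (sup_le ?_ ?_)
        · refine Submodule.span_le.2 ?_
          rintro x ⟨h, ξ, hξ, rfl⟩
          exact hW h ξ (ih m (Nat.lt_succ_self m) hξ)
        · exact iSup_le fun k => iSup_le fun hk =>
            ih k (Finset.mem_range.mp hk)
  exact Dense.mono (SetLike.coe_subset_coe.mpr (iSup_le hVle)) hdense
end

section
/- Let h_1, ..., h_d be orthonormal vectors in H and suppose the positive operators P_Q^{(n)} defining the Q-inner product satisfy P_Q^{(n+1)} ≤ C (1 ⊗ P_Q^{(n)}) and P_Q^{(n+1)} ≤ C (P_Q^{(n)} ⊗ 1) for all n, with C = 1/(1-q). Then ‖Σ_{i=1}^d a⁺(h_i) a_r⁺(h_i)‖_Q ≤ C √d, where a⁺(h) ξ = h ⊗ ξ and a_r⁺(h) ξ = ξ ⊗ h are the left and right creation operators on the Q-Fock space. -/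
open scoped RealInnerProductSpace

/-- Norm bound for `Σ_{i=1}^d a⁺(h_i) a_r⁺(h_i)` (part (1) of Lemma `bounds`):
for orthonormal `h₁, …, h_d` and `C = 1/(1-q)`, if the positive operators defining the
`Q`-inner products satisfy `P_Q^{(n+2)} ≤ C² (1 ⊗ P_Q^{(n)} ⊗ 1)`, then for every
`f ∈ H^{⊗n}`, `‖Σ_i h_i ⊗ f ⊗ h_i‖_Q² ≤ C² d ‖f‖_Q²`, i.e. the operator
`Σ_i a⁺(h_i) a_r⁺(h_i)` has `Q`-norm at most `C √d`.

Here `H^{⊗n}` and `H^{⊗(n+2)}` are abstracted as Hilbert spaces `K` and `M`, the two-sided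
tensor insertion `(h, f, h') ↦ h ⊗ f ⊗ h'` as a trilinear map `t` satisfying
`⟨t h f h', t g f' g'⟩ = ⟨h,g⟩⟨f,f'⟩⟨h',g'⟩`, and `1 ⊗ P_n ⊗ 1` as an operator `oneP`
with `oneP (t h f h') = t h (P_n f) h'`. -/
theorem left_right_creation_sum_bound
    {H K M : Type*} [NormedAddCommGroup H] [InnerProductSpace ℝ H] [CompleteSpace H]
    [NormedAddCommGroup K] [InnerProductSpace ℝ K] [CompleteSpace K]
    [NormedAddCommGroup M] [InnerProductSpace ℝ M] [CompleteSpace M]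
    (d : ℕ) (h : Fin d → H) (hON : Orthonormal ℝ h)
    (q C : ℝ) (hq0 : 0 ≤ q) (hq1 : q < 1) (hC : C = (1 - q)⁻¹)
    (t : H →ₗ[ℝ] K →ₗ[ℝ] H →ₗ[ℝ] M)
    (ht : ∀ (h1 h2 : H) (f1 f2 : K) (g1 g2 : H),
      ⟪t h1 f1 g1, t h2 f2 g2⟫ = ⟪h1, h2⟫ * ⟪f1, f2⟫ * ⟪g1, g2⟫)
    (Pn : K →L[ℝ] K) (Pn2 : M →L[ℝ] M)
    (hPn : Pn.IsPositive) (hPn2 : Pn2.IsPositive)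
    (oneP : M →L[ℝ] M)
    (honeP : ∀ (a : H) (f : K) (b : H), oneP (t a f b) = t a (Pn f) b)
    (hle : ((C ^ 2) • oneP - Pn2).IsPositive)
    (f : K) :
    ⟪∑ i, t (h i) f (h i), Pn2 (∑ i, t (h i) f (h i))⟫ ≤ C ^ 2 * d * ⟪f, Pn f⟫ := by
  set x : M := ∑ i, t (h i) f (h i) with hx
  have hpos : 0 ≤ ⟪x, ((C ^ 2) • oneP - Pn2) x⟫ := hle.inner_nonneg_right x
  have hsub : ⟪x, ((C ^ 2) • oneP - Pn2) x⟫ = C ^ 2 * ⟪x, oneP x⟫ - ⟪x, Pn2 x⟫ := by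
    simp [ContinuousLinearMap.sub_apply, ContinuousLinearMap.smul_apply, inner_sub_right,
      inner_smul_right]
  have hkey : ⟪x, oneP x⟫ = (d : ℝ) * ⟪f, Pn f⟫ := by
    have : ⟪x, oneP x⟫ = ∑ i, ∑ j, ⟪t (h i) f (h i), t (h j) (Pn f) (h j)⟫ := by
      rw [hx, map_sum, sum_inner]
      refine Finset.sum_congr rfl fun i _ => ?_
      rw [inner_sum]
      exact Finset.sum_congr rfl fun j _ => by rw [honeP]
    rw [this]
    have : ∀ i j : Fin d, ⟪t (h i) f (h i), t (h j) (Pn f) (h j)⟫ =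
        if i = j then ⟪f, Pn f⟫ else 0 := by
      intro i j
      rw [ht]
      rcases eq_or_ne i j with rfl | hij
      · simp [real_inner_self_eq_norm_sq, hON.1 i]
      · simp [hON.2 hij, hij]
    simp only [this, Finset.sum_ite_eq, Finset.mem_univ, if_true]
    simp [Finset.sum_const, mul_comm]
  calc ⟪x, Pn2 x⟫ ≤ C ^ 2 * ⟪x, oneP x⟫ := by linarith [hpos, hsub]
    _ = C ^ 2 * d * ⟪f, Pn f⟫ := by rw [hkey]; ring
end

section
/- Let h_1, ..., h_d be orthonormal vectors in H, and suppose P_Q^{(n)} ≤ C (1 ⊗ P_Q^{(n-1)}) for all n and each annihilation operator satisfies ‖a(h_i)‖_Q ≤ √C (with C = 1/(1-q)). Then ‖Σ_{i=1}^d a⁺(h_i) a_r(h_i)‖_Q ≤ C √d, where a_r(h) denotes the right annihilation operator. -/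
open scoped RealInnerProductSpace

/-- Norm bound for `Σ_{i=1}^d a⁺(h_i) a_r(h_i)` (part (2) of Lemma `bounds`):
for orthonormal `h₁, …, h_d` and `C = 1/(1-q)`, if `P_Q^{(n)} ≤ C (1 ⊗ P_Q^{(n-1)})` and
each right annihilation operator satisfies `‖a_r(h_i)‖_Q ≤ √C`, then for every `f`,
`‖Σ_i h_i ⊗ a_r(h_i) f‖_Q² ≤ C² d ‖f‖_Q²`, i.e. `‖Σ_i a⁺(h_i) a_r(h_i)‖_Q ≤ C √d`.

Here `H^{⊗(n-1)}` and `H^{⊗n}` are abstracted as Hilbert spaces `K'` and `K`, the tensor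
insertion `(h, f) ↦ h ⊗ f` as a bilinear map `t` with
`⟨t a f, t b g⟩ = ⟨a,b⟩⟨f,g⟩`, `1 ⊗ P'` as an operator `oneP'` with
`oneP' (t a f) = t a (P' f)`, and the right annihilation operators `a_r(h_i)` as
operators `ar i : K → K'` with `⟨ar i f, P' (ar i f)⟩ ≤ C ⟨f, P f⟩`. -/
theorem left_creation_right_annihilation_sum_bound
    {H K K' : Type*} [NormedAddCommGroup H] [InnerProductSpace ℝ H] [CompleteSpace H]
    [NormedAddCommGroup K] [InnerProductSpace ℝ K] [CompleteSpace K]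
    [NormedAddCommGroup K'] [InnerProductSpace ℝ K'] [CompleteSpace K']
    (d : ℕ) (h : Fin d → H) (hON : Orthonormal ℝ h)
    (q C : ℝ) (hq0 : 0 ≤ q) (hq1 : q < 1) (hC : C = (1 - q)⁻¹)
    (t : H →ₗ[ℝ] K' →ₗ[ℝ] K)
    (ht : ∀ (a b : H) (f g : K'), ⟪t a f, t b g⟫ = ⟪a, b⟫ * ⟪f, g⟫)
    (P : K →L[ℝ] K) (P' : K' →L[ℝ] K')
    (hP : P.IsPositive) (hP' : P'.IsPositive)
    (oneP' : K →L[ℝ] K)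
    (honeP' : ∀ (a : H) (f : K'), oneP' (t a f) = t a (P' f))
    (hle : (C • oneP' - P).IsPositive)
    (ar : Fin d → (K →L[ℝ] K'))
    (har : ∀ (i : Fin d) (f : K), ⟪ar i f, P' (ar i f)⟫ ≤ C * ⟪f, P f⟫)
    (f : K) :
    ⟪∑ i, t (h i) (ar i f), P (∑ i, t (h i) (ar i f))⟫ ≤ C ^ 2 * d * ⟪f, P f⟫ := by
  have hCpos : 0 < C := by
    rw [hC]; exact inv_pos.2 (by linarith)
  set ξ : K := ∑ i, t (h i) (ar i f) with hξ
  have hstep1 : ⟪ξ, P ξ⟫ ≤ C * ⟪ξ, oneP' ξ⟫ := by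
    have := hle.inner_nonneg_right ξ
    simp only [ContinuousLinearMap.sub_apply, ContinuousLinearMap.smul_apply,
      inner_sub_right, inner_smul_right, RCLike.re_to_real] at this
    linarith
  have hdiag : ⟪ξ, oneP' ξ⟫ = ∑ i, ⟪ar i f, P' (ar i f)⟫ := by
    rw [hξ, map_sum, inner_sum]
    refine Finset.sum_congr rfl fun j _ => ?_
    rw [honeP', sum_inner, Finset.sum_eq_single j
      (fun i _ hij => by rw [ht, hON.2 hij]; ring)
      (fun hj => absurd (Finset.mem_univ j) hj)]
    rw [ht, real_inner_self_eq_norm_sq, hON.1 j]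
    ring
  calc ⟪ξ, P ξ⟫ ≤ C * ⟪ξ, oneP' ξ⟫ := hstep1
    _ = C * ∑ i, ⟪ar i f, P' (ar i f)⟫ := by rw [hdiag]
    _ ≤ C * ∑ _i : Fin d, C * ⟪f, P f⟫ := by
        apply mul_le_mul_of_nonneg_left _ hCpos.le
        exact Finset.sum_le_sum fun i _ => har i f
    _ = C ^ 2 * d * ⟪f, P f⟫ := by
        simp [Finset.sum_const]; ring
end

section
/- Suppose N is a positive bounded operator on a Hilbert space K with a distinguished unit vector Ω such that NΩ = 0 and N ≥ ε·1 on K ⊖ ℂΩ for some ε > 0. If M is a von Neumann algebra on K for which Ω is separating, and X ∈ M satisfies N^{1/2}(XΩ) = 0 (e.g., X commutes with finitely many operators whose squared differences sum to N), then X ∈ ℂ·1. In particular, applied to Γ_Q(H) with N_d = Σ_{i=1}^d (w(g_i) − w_r(g_i))², if ker N_d = ℂΩ then any X in the center of Γ_Q(H) is scalar, so Γ_Q(H) is a factor. -/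
open scoped ComplexInnerProductSpace

/-- Let `N` be a positive bounded operator on a Hilbert space `K` with a distinguished unit
vector `Ω` such that `N Ω = 0` and `N ≥ ε · 1` on `K ⊖ ℂΩ` for some `ε > 0`.  If `M` is a
von Neumann algebra on `K` for which `Ω` is separating, and `X ∈ M` satisfies
`N (X Ω) = 0` (equivalently `N^{1/2} (X Ω) = 0`), then `X` is a scalar.
(Applied to `Γ_Q(H)` and `N_d = Σᵢ (w(gᵢ) − w_r(gᵢ))²`, this shows every central element
of `Γ_Q(H)` is scalar, so `Γ_Q(H)` is a factor.) -/
theorem scalar_of_kernel_of_gap_operator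
    {K : Type*} [NormedAddCommGroup K] [InnerProductSpace ℂ K] [CompleteSpace K]
    (N : K →L[ℂ] K) (Ω : K) (hΩ : ‖Ω‖ = 1) (ε : ℝ) (hε : 0 < ε)
    (hNpos : N.IsPositive) (hNΩ : N Ω = 0)
    (hgap : ∀ x : K, ⟪x, Ω⟫ = 0 → ε * ‖x‖ ^ 2 ≤ (⟪N x, x⟫).re)
    (M : VonNeumannAlgebra K)
    (hsep : ∀ Y ∈ M, Y Ω = 0 → Y = 0)
    (X : K →L[ℂ] K) (hX : X ∈ M) (hXΩ : N (X Ω) = 0) :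
    ∃ c : ℂ, X = c • (1 : K →L[ℂ] K) := by
  set c : ℂ := ⟪Ω, X Ω⟫ with hc
  set y : K := X Ω - c • Ω with hy
  have hyΩ : ⟪y, Ω⟫ = 0 := by
    have hΩΩ : ⟪Ω, Ω⟫ = (1 : ℂ) := by
      rw [inner_self_eq_norm_sq_to_K, hΩ]; norm_num
    rw [hy, inner_sub_left, inner_smul_left, hΩΩ, mul_one, hc,
      ← inner_conj_symm Ω (X Ω), Complex.conj_conj, sub_self]
  have hNy : N y = 0 := by
    simp [hy, map_sub, hXΩ, hNΩ]
  have hy0 : y = 0 := by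
    have h := hgap y hyΩ
    rw [hNy] at h
    simp only [inner_zero_left, Complex.zero_re] at h
    have h2 : ‖y‖ ^ 2 ≤ 0 := by nlinarith [sq_nonneg ‖y‖]
    have : ‖y‖ = 0 := by nlinarith [norm_nonneg y]
    exact norm_eq_zero.mp this
  have hXc : X Ω = c • Ω := by
    have := hy0; rw [hy, sub_eq_zero] at this; exact this
  have hmem : X - c • (1 : K →L[ℂ] K) ∈ M := by
    have : c • (1 : K →L[ℂ] K) ∈ M := by
      simpa [Algebra.algebraMap_eq_smul_one] using M.algebraMap_mem c
    exact sub_mem hX this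
  have h0 : (X - c • (1 : K →L[ℂ] K)) Ω = 0 := by
    simp [hXc]
  have := hsep _ hmem h0
  exact ⟨c, sub_eq_zero.mp this⟩
end
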